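/- arXiv:0704.3649 — 3 statements merged into one kernel-verified Lean document; each statement's English description precedes it below -/
import Mathlib

section
/- Let Q : [0,1] → ℝ be measurable and bounded, and let Q* be its increasing monotone rearrangement. Then for every true nondecreasing function Q₀ : [0,1] → ℝ in L^p([0,1]) and every p ∈ [1,∞), we have ‖Q* − Q₀‖_{L^p} ≤ ‖Q − Q₀‖_{L^p}. (Improvement-in-estimation property of rearrangement.) -/
/-!
Both sides are superpositions of hinge losses: for `p ≥ 1` there is a measure `ν` on `[0, ∞)`
(`δ₀` if `p = 1`, density `p (p - 1) r ^ (p - 2)` if `p > 1`) with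
`|x| ^ p = ∫ ((x - r)₊ + (-x - r)₊) dν(r)`. By Fubini,
`∫ (h - f - r)₊ dμ = ∫ μ ({f ≤ s} \ {h ≤ s + r}) ds`, and `μ (A \ B) = μ A - μ (A ∩ B)`; so every
hinge loss between `Q` and `Q₀` decreases when `Q` is replaced by a function with the same
distribution and a pointwise larger joint distribution function `(s, t) ↦ μ {Q ≤ s, Q₀ ≤ t}`.
The rearrangement is such a function: its sublevel sets are initial segments of `(0, 1)` with the
same measures as those of `Q`, and the sublevel sets of the nondecreasing `Q₀` are initial segments
too. Two initial segments are nested, so their intersection is as large as their measures allow.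
-/
open MeasureTheory Set Filter Topology

/-- Distribution function of `Q(U)`, `U` uniform on `[0,1]`. -/
noncomputable def distF (Q : ℝ → ℝ) (y : ℝ) : ℝ :=
  (volume {u ∈ Set.Icc (0:ℝ) 1 | Q u ≤ y}).toReal

/-- Increasing (monotone) rearrangement of `Q`: the quantile function of `distF Q`. -/
noncomputable def rearr (Q : ℝ → ℝ) (u : ℝ) : ℝ :=
  sInf {y : ℝ | u ≤ distF Q y}

theorem integral_rpow_sub_two_mul_sub {p y : ℝ} (hp : 1 < p) (hy : 0 ≤ y) :
    ∫ r in (0:ℝ)..y, p * (p - 1) * r ^ (p - 2) * (y - r) = y ^ p := by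
  have hsplit : ∀ r ∈ uIcc 0 y, p * (p - 1) * r ^ (p - 2) * (y - r)
      = p * (p - 1) * y * r ^ (p - 2) - p * (p - 1) * r ^ (p - 1) := by
    intro r hr
    rw [uIcc_of_le hy] at hr
    rw [show p - 1 = p - 2 + 1 by ring, Real.rpow_add' hr.1 (by linarith), Real.rpow_one]
    ring
  have hint : ∀ {q : ℝ}, -1 < q → IntervalIntegrable (fun r : ℝ => r ^ q) volume 0 y :=
    fun hq => intervalIntegral.intervalIntegrable_rpow' hq
  rw [intervalIntegral.integral_congr hsplit, intervalIntegral.integral_sub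
    ((hint (by linarith)).const_mul _) ((hint (by linarith)).const_mul _),
    intervalIntegral.integral_const_mul, intervalIntegral.integral_const_mul,
    integral_rpow (Or.inl (by linarith)), integral_rpow (Or.inl (by linarith)),
    Real.zero_rpow (by linarith), Real.zero_rpow (by linarith),
    show p - 2 + 1 = p - 1 by ring, show p - 1 + 1 = p by ring,
    show y ^ p = y * y ^ (p - 1) by rw [← Real.rpow_one_add' hy (by linarith)]; ring_nf]
  have hp₁ : p - 1 ≠ 0 := by linarith
  field_simp
  ring

theorem lintegral_ofReal_rpow_sub_two_mul_ofReal_sub {p y : ℝ} (hp : 1 < p) (hy : 0 ≤ y) :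
    ∫⁻ r in Ioi 0, ENNReal.ofReal (p * (p - 1) * r ^ (p - 2)) * ENNReal.ofReal (y - r)
      = ENNReal.ofReal (y ^ p) := by
  set w : ℝ → ℝ := fun r => p * (p - 1) * r ^ (p - 2)
  have hw : ∀ r, 0 ≤ r → 0 ≤ w r := fun r hr =>
    mul_nonneg (mul_nonneg (by linarith) (by linarith)) (Real.rpow_nonneg hr _)
  have hint : IntegrableOn (fun r => w r * (y - r)) (Ioc 0 y) :=
    (intervalIntegrable_iff_integrableOn_Ioc_of_le hy).1
      (((intervalIntegral.intervalIntegrable_rpow' (by linarith)).const_mul _).mul_continuousOn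
        (continuousOn_const.sub continuousOn_id))
  calc ∫⁻ r in Ioi 0, ENNReal.ofReal (w r) * ENNReal.ofReal (y - r)
      = ∫⁻ r in Ioc 0 y ∪ Ioi y, ENNReal.ofReal (w r * (y - r)) := by
        rw [Ioc_union_Ioi_eq_Ioi hy]
        exact setLIntegral_congr_fun measurableSet_Ioi fun r hr =>
          (ENNReal.ofReal_mul (hw r (le_of_lt hr))).symm
    _ = ∫⁻ r in Ioc 0 y, ENNReal.ofReal (w r * (y - r)) := by
        have hzero : ∫⁻ r in Ioi y, ENNReal.ofReal (w r * (y - r)) = 0 :=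
          (setLIntegral_congr_fun measurableSet_Ioi fun r hr => ENNReal.ofReal_of_nonpos
            (mul_nonpos_of_nonneg_of_nonpos (hw r (hy.trans hr.le))
              (by linarith [mem_Ioi.1 hr]))).trans lintegral_zero
        rw [lintegral_union measurableSet_Ioi Ioc_disjoint_Ioi_same, hzero, add_zero]
    _ = ENNReal.ofReal (y ^ p) := by
        rw [← ofReal_integral_eq_lintegral_ofReal hint
          ((ae_restrict_iff' measurableSet_Ioc).2 (ae_of_all _ fun r hr =>
            mul_nonneg (hw r hr.1.le) (by linarith [hr.2]))),
          ← intervalIntegral.integral_of_le hy, integral_rpow_sub_two_mul_sub hp hy]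

theorem ofReal_sub_sub_add_ofReal_sub_sub {a b r : ℝ} (hr : 0 ≤ r) :
    ENNReal.ofReal (a - b - r) + ENNReal.ofReal (b - a - r) = ENNReal.ofReal (|a - b| - r) := by
  rcases le_total a b with hab | hab
  · rw [ENNReal.ofReal_of_nonpos (by linarith), zero_add, abs_of_nonpos (by linarith), neg_sub]
  · rw [ENNReal.ofReal_of_nonpos (p := b - a - r) (by linarith), add_zero,
      abs_of_nonneg (by linarith)]

theorem exists_ofReal_rpow_abs_sub_eq_lintegral {p : ℝ} (hp : 1 ≤ p) :
    ∃ ν : Measure ℝ, SFinite ν ∧ ∀ a b : ℝ, ENNReal.ofReal (|a - b| ^ p)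
      = ∫⁻ r, ENNReal.ofReal (a - b - r) + ENNReal.ofReal (b - a - r) ∂ν := by
  rcases hp.eq_or_lt with rfl | hp
  · refine ⟨Measure.dirac 0, inferInstance, fun a b => ?_⟩
    rw [lintegral_dirac, ofReal_sub_sub_add_ofReal_sub_sub le_rfl, sub_zero, Real.rpow_one]
  · refine ⟨(volume.restrict (Ioi 0)).withDensity
      fun r => ENNReal.ofReal (p * (p - 1) * r ^ (p - 2)), inferInstance, fun a b => ?_⟩
    rw [lintegral_withDensity_eq_lintegral_mul _ (by fun_prop) (by fun_prop),
      ← lintegral_ofReal_rpow_sub_two_mul_ofReal_sub hp (abs_nonneg (a - b))]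
    exact setLIntegral_congr_fun measurableSet_Ioi fun r hr => by
      simp only [Pi.mul_apply, ofReal_sub_sub_add_ofReal_sub_sub (le_of_lt hr)]

namespace MeasureTheory

variable {α : Type*} [MeasurableSpace α] {μ : Measure α}

theorem lintegral_ofReal_sub_sub_eq_lintegral_measure_diff [SFinite μ] {f h : α → ℝ}
    (hf : Measurable f) (hh : Measurable h) (r : ℝ) :
    ∫⁻ x, ENNReal.ofReal (h x - f x - r) ∂μ
      = ∫⁻ s, μ ({x | f x ≤ s} \ {x | h x ≤ s + r}) := by
  set C : Set (α × ℝ) := {z | f z.1 ≤ z.2 ∧ z.2 + r < h z.1}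
  have hC : MeasurableSet C :=
    (measurableSet_le (hf.comp measurable_fst) measurable_snd).inter
      (measurableSet_lt (measurable_snd.add_const r) (hh.comp measurable_fst))
  calc ∫⁻ x, ENNReal.ofReal (h x - f x - r) ∂μ
      = ∫⁻ x, volume (Prod.mk x ⁻¹' C) ∂μ := by
        refine lintegral_congr fun x => ?_
        have : Prod.mk x ⁻¹' C = Ico (f x) (h x - r) := by
          ext s; simp [C, lt_sub_iff_add_lt]
        rw [this, Real.volume_Ico, sub_right_comm]
    _ = μ.prod volume C := (Measure.prod_apply hC).symm
    _ = ∫⁻ s, μ ((·, s) ⁻¹' C) := Measure.prod_apply_symm hC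
    _ = ∫⁻ s, μ ({x | f x ≤ s} \ {x | h x ≤ s + r}) := by
        congr! 3 with s; ext x; simp [C]

theorem measure_diff_le_measure_diff_of_inter_le [IsFiniteMeasure μ] {s t s' t' : Set α}
    (ht : MeasurableSet t) (ht' : MeasurableSet t') (hs : μ s' = μ s)
    (hinter : μ (s ∩ t) ≤ μ (s' ∩ t')) : μ (s' \ t') ≤ μ (s \ t) := by
  refine ENNReal.le_of_add_le_add_right (measure_ne_top μ (s' ∩ t')) ?_
  calc μ (s' \ t') + μ (s' ∩ t') = μ (s \ t) + μ (s ∩ t) := by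
        rw [measure_sdiff_add_inter s' ht', measure_sdiff_add_inter s ht, hs]
    _ ≤ μ (s \ t) + μ (s' ∩ t') := by gcongr

theorem Measure.restrict_apply_inter_eq_left {s A B : Set α} (hs : MeasurableSet s)
    (hAB : ∀ x ∈ s, x ∈ A → x ∈ B) : μ.restrict s (A ∩ B) = μ.restrict s A :=
  measure_congr (ae_restrict_of_forall_mem hs fun x hx =>
    propext ⟨And.left, fun hA => ⟨hA, hAB x hx hA⟩⟩)

/-- The concordance order: `(f', g)` has the same marginals as `(f, g)` and a larger joint
distribution function. -/
structure MoreConcordant (μ : Measure α) (g f f' : α → ℝ) : Prop where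
  measure_le_eq : ∀ s, μ {x | f' x ≤ s} = μ {x | f x ≤ s}
  measure_inter_le : ∀ s t,
    μ ({x | f x ≤ s} ∩ {x | g x ≤ t}) ≤ μ ({x | f' x ≤ s} ∩ {x | g x ≤ t})

namespace MoreConcordant

variable {g f f' : α → ℝ}

theorem congr_ae {f'' : α → ℝ} (h : MoreConcordant μ g f f') (hf' : f' =ᵐ[μ] f'') :
    MoreConcordant μ g f f'' := by
  have hset : ∀ s, {x | f' x ≤ s} =ᵐ[μ] {x | f'' x ≤ s} := fun s =>
    hf'.mono fun x hx => by change (f' x ≤ s) = (f'' x ≤ s); rw [hx]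
  refine ⟨fun s => ?_, fun s t => ?_⟩
  · rw [← measure_congr (hset s), h.measure_le_eq]
  · rw [← measure_congr ((hset s).inter (ae_eq_refl {x | g x ≤ t}))]
    exact h.measure_inter_le s t

variable [IsFiniteMeasure μ]

theorem lintegral_hinge_le (h : MoreConcordant μ g f f') (hf : Measurable f)
    (hf' : Measurable f') (hg : Measurable g) (r : ℝ) :
    ∫⁻ x, ENNReal.ofReal (f' x - g x - r) ∂μ + ∫⁻ x, ENNReal.ofReal (g x - f' x - r) ∂μ
      ≤ ∫⁻ x, ENNReal.ofReal (f x - g x - r) ∂μ + ∫⁻ x, ENNReal.ofReal (g x - f x - r) ∂μ := by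
  have hle : ∀ {k : α → ℝ}, Measurable k → ∀ s, MeasurableSet {x | k x ≤ s} :=
    fun hk s => measurableSet_le hk measurable_const
  simp only [lintegral_ofReal_sub_sub_eq_lintegral_measure_diff hg hf,
    lintegral_ofReal_sub_sub_eq_lintegral_measure_diff hg hf',
    lintegral_ofReal_sub_sub_eq_lintegral_measure_diff hf hg,
    lintegral_ofReal_sub_sub_eq_lintegral_measure_diff hf' hg]
  refine add_le_add (lintegral_mono fun s => ?_) (lintegral_mono fun s => ?_)
  · refine measure_diff_le_measure_diff_of_inter_le (hle hf _) (hle hf' _) rfl ?_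
    simpa only [inter_comm] using h.measure_inter_le (s + r) s
  · exact measure_diff_le_measure_diff_of_inter_le (hle hg _) (hle hg _) (h.measure_le_eq s)
      (h.measure_inter_le s (s + r))

theorem lintegral_lintegral_hinge_le (h : MoreConcordant μ g f f') (hf : Measurable f)
    (hf' : Measurable f') (hg : Measurable g) (ν : Measure ℝ) [SFinite ν] :
    ∫⁻ x, ∫⁻ r, ENNReal.ofReal (f' x - g x - r) + ENNReal.ofReal (g x - f' x - r) ∂ν ∂μ
      ≤ ∫⁻ x, ∫⁻ r, ENNReal.ofReal (f x - g x - r) + ENNReal.ofReal (g x - f x - r) ∂ν ∂μ := by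
  rw [lintegral_lintegral_swap (by fun_prop), lintegral_lintegral_swap (μ := μ) (by fun_prop)]
  refine lintegral_mono fun r => ?_
  rw [lintegral_add_left (by fun_prop), lintegral_add_left (by fun_prop)]
  exact h.lintegral_hinge_le hf hf' hg r

theorem lintegral_rpow_abs_sub_le (h : MoreConcordant μ g f f') (hf : Measurable f)
    (hf' : Measurable f') (hg : Measurable g) {p : ℝ} (hp : 1 ≤ p) :
    ∫⁻ x, ENNReal.ofReal (|f' x - g x| ^ p) ∂μ ≤ ∫⁻ x, ENNReal.ofReal (|f x - g x| ^ p) ∂μ := by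
  obtain ⟨ν, _, hν⟩ := exists_ofReal_rpow_abs_sub_eq_lintegral hp
  simp only [hν]
  exact h.lintegral_lintegral_hinge_le hf hf' hg ν

end MoreConcordant

end MeasureTheory

theorem StieltjesFunction.sInf_le_iff (f : StieltjesFunction ℝ) {u : ℝ}
    (hne : {y | u ≤ f y}.Nonempty) (hbdd : BddBelow {y | u ≤ f y}) (s : ℝ) :
    sInf {y | u ≤ f y} ≤ s ↔ u ≤ f s := by
  refine ⟨fun hs => ?_, fun hs => csInf_le hbdd hs⟩
  have hinf : u ≤ f (sInf {y | u ≤ f y}) := by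
    refine ge_of_tendsto ((f.right_continuous _).mono Ioi_subset_Ici_self) ?_
    filter_upwards [self_mem_nhdsWithin] with y hy
    obtain ⟨z, hz, hzy⟩ := exists_lt_of_csInf_lt hne hy
    exact hz.trans (f.mono hzy.le)
  exact hinf.trans (f.mono hs)

namespace ProbabilityTheory

theorem sInf_le_iff_le_cdf (μ : Measure ℝ) [IsProbabilityMeasure μ] {u : ℝ} (hu : u ∈ Ioo 0 1)
    (s : ℝ) : sInf {y | u ≤ cdf μ y} ≤ s ↔ u ≤ cdf μ s := by
  refine (cdf μ).sInf_le_iff ((tendsto_cdf_atTop μ).eventually_const_le hu.2).exists ?_ s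
  obtain ⟨y₀, hy₀⟩ := ((tendsto_cdf_atBot μ).eventually_lt_const hu.1).exists
  exact ⟨y₀, fun y hy => le_of_not_gt fun hyy₀ => (hy.trans (monotone_cdf μ hyy₀.le)).not_gt hy₀⟩

end ProbabilityTheory

open ProbabilityTheory

section Rearrangement

local notation "μ₀" => volume.restrict (Ioo (0:ℝ) 1)

instance : IsProbabilityMeasure μ₀ := ⟨by simp⟩

variable {Q : ℝ → ℝ}

theorem distF_eq_cdf (hQ : Measurable Q) : distF Q = cdf (Measure.map Q μ₀) := by
  have := Measure.isProbabilityMeasure_map (μ := μ₀) hQ.aemeasurable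
  ext y
  rw [cdf_eq_real, measureReal_def, Measure.map_apply hQ measurableSet_Iic,
    Measure.restrict_congr_set Ioo_ae_eq_Icc, Measure.restrict_apply' measurableSet_Icc, inter_comm,
    distF]
  rfl

theorem rearr_le_iff (hQ : Measurable Q) {u : ℝ} (hu : u ∈ Ioo 0 1) (s : ℝ) :
    rearr Q u ≤ s ↔ u ≤ distF Q s := by
  have := Measure.isProbabilityMeasure_map (μ := μ₀) hQ.aemeasurable
  rw [rearr, distF_eq_cdf hQ]
  exact sInf_le_iff_le_cdf _ hu s

theorem monotoneOn_rearr (hQ : Measurable Q) : MonotoneOn (rearr Q) (Ioo 0 1) :=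
  fun _ hu _ hv huv => (rearr_le_iff hQ hu _).2 (huv.trans ((rearr_le_iff hQ hv _).1 le_rfl))

theorem aemeasurable_rearr (hQ : Measurable Q) : AEMeasurable (rearr Q) μ₀ :=
  aemeasurable_restrict_of_monotoneOn measurableSet_Ioo (monotoneOn_rearr hQ)

theorem volume_restrict_Ioo_Iic {c : ℝ} (hc : c ≤ 1) : μ₀ (Iic c) = ENNReal.ofReal c := by
  rw [Measure.restrict_congr_set Ioo_ae_eq_Ioc, Measure.restrict_apply measurableSet_Iic,
    inter_comm, Ioc_inter_Iic, min_eq_right hc, Real.volume_Ioc, sub_zero]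

theorem volume_restrict_Ioo_setOf_rearr_le (hQ : Measurable Q) (s : ℝ) :
    μ₀ {u | rearr Q u ≤ s} = μ₀ {u | Q u ≤ s} := by
  have := Measure.isProbabilityMeasure_map (μ := μ₀) hQ.aemeasurable
  have hae : {u | rearr Q u ≤ s} =ᵐ[μ₀] Iic (distF Q s) :=
    ae_restrict_of_forall_mem measurableSet_Ioo fun u hu => propext (rearr_le_iff hQ hu s)
  rw [measure_congr hae, distF_eq_cdf hQ, volume_restrict_Ioo_Iic (cdf_le_one _ _),
    ofReal_cdf, Measure.map_apply hQ measurableSet_Iic]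
  rfl

theorem moreConcordant_rearr (hQ : Measurable Q) {Q₀ : ℝ → ℝ} (hQ₀ : MonotoneOn Q₀ (Ioo 0 1)) :
    MoreConcordant μ₀ Q₀ Q (rearr Q) := by
  refine ⟨volume_restrict_Ioo_setOf_rearr_le hQ, fun s t => ?_⟩
  -- Both `{rearr Q ≤ s}` and `{Q₀ ≤ t}` are initial segments of `(0, 1)`, hence nested.
  by_cases hc : ∀ v ∈ Ioo (0:ℝ) 1, v ≤ distF Q s → Q₀ v ≤ t
  · calc μ₀ ({u | Q u ≤ s} ∩ {u | Q₀ u ≤ t})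
        ≤ μ₀ {u | Q u ≤ s} := measure_mono inter_subset_left
      _ = μ₀ {u | rearr Q u ≤ s} := (volume_restrict_Ioo_setOf_rearr_le hQ s).symm
      _ = μ₀ ({u | rearr Q u ≤ s} ∩ {u | Q₀ u ≤ t}) :=
        (Measure.restrict_apply_inter_eq_left measurableSet_Ioo fun u hu hus =>
          hc u hu ((rearr_le_iff hQ hu s).1 hus)).symm
  · push Not at hc
    obtain ⟨v, hv, hvs, hvt⟩ := hc
    calc μ₀ ({u | Q u ≤ s} ∩ {u | Q₀ u ≤ t})
        ≤ μ₀ {u | Q₀ u ≤ t} := measure_mono inter_subset_right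
      _ = μ₀ ({u | Q₀ u ≤ t} ∩ {u | rearr Q u ≤ s}) := by
        refine (Measure.restrict_apply_inter_eq_left measurableSet_Ioo fun u hu hut => ?_).symm
        refine (rearr_le_iff hQ hu s).2 (le_trans ?_ hvs)
        exact le_of_not_gt fun hvu => hvt.not_ge ((hQ₀ hv hu hvu.le).trans hut)
      _ = μ₀ ({u | rearr Q u ≤ s} ∩ {u | Q₀ u ≤ t}) := by rw [inter_comm]

end Rearrangement

theorem integrableOn_rpow_abs_sub_of_monotoneOn {Q Q₀ : ℝ → ℝ} {a b M p : ℝ}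
    (hQ : Measurable Q) (hbdd : ∀ u ∈ Icc a b, |Q u| ≤ M) (hQ₀ : Measurable Q₀)
    (hmono : MonotoneOn Q₀ (Icc a b)) (hp : 0 ≤ p) :
    IntegrableOn (fun u => |Q u - Q₀ u| ^ p) (Icc a b) := by
  refine Measure.integrableOn_of_bounded (M := (M + max |Q₀ a| |Q₀ b|) ^ p) (by simp)
    (by fun_prop) (ae_restrict_of_forall_mem measurableSet_Icc fun u hu => ?_)
  have ha : a ∈ Icc a b := left_mem_Icc.2 (hu.1.trans hu.2)
  have hb : b ∈ Icc a b := right_mem_Icc.2 (hu.1.trans hu.2)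
  rw [Real.norm_of_nonneg (by positivity)]
  gcongr
  exact (abs_sub _ _).trans (add_le_add (hbdd u hu)
    (abs_le_max_abs_abs (hmono ha hu hu.1) (hmono hu hb hu.2)))

/-- Improvement in estimation: the rearranged curve is weakly closer in `L^p`, `1 ≤ p < ∞`,
to any nondecreasing target `Q₀` than the original curve. -/
theorem rearr_Lp_improvement (Q Q₀ : ℝ → ℝ)
    (hmeas : Measurable Q) (M : ℝ) (hbdd : ∀ u ∈ Set.Icc (0:ℝ) 1, |Q u| ≤ M)
    (hmeas₀ : Measurable Q₀) (hmono₀ : MonotoneOn Q₀ (Set.Icc (0:ℝ) 1))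
    (p : ℝ) (hp : 1 ≤ p) :
    ∫ u in Set.Icc (0:ℝ) 1, |rearr Q u - Q₀ u| ^ p
      ≤ ∫ u in Set.Icc (0:ℝ) 1, |Q u - Q₀ u| ^ p := by
  obtain ⟨G, hG, hRG⟩ := aemeasurable_rearr hmeas
  have hconc : MoreConcordant (volume.restrict (Ioo 0 1)) Q₀ Q G :=
    (moreConcordant_rearr hmeas (hmono₀.mono Ioo_subset_Icc_self)).congr_ae hRG
  have hint : IntegrableOn (fun u => |Q u - Q₀ u| ^ p) (Ioo 0 1) :=
    (integrableOn_rpow_abs_sub_of_monotoneOn hmeas hbdd hmeas₀ hmono₀ (by linarith)).mono_set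
      Ioo_subset_Icc_self
  have hnonneg : ∀ f : ℝ → ℝ, 0 ≤ᵐ[volume.restrict (Ioo 0 1)] fun u => |f u - Q₀ u| ^ p :=
    fun f => ae_of_all _ fun u => by positivity
  have hae : (fun u => |rearr Q u - Q₀ u| ^ p) =ᵐ[volume.restrict (Ioo 0 1)]
      fun u => |G u - Q₀ u| ^ p := hRG.mono fun u hu => by simp only [hu]
  rw [integral_Icc_eq_integral_Ioo, integral_Icc_eq_integral_Ioo, integral_congr_ae hae,
    integral_eq_lintegral_of_nonneg_ae (hnonneg _)
      ((hG.sub hmeas₀).abs.pow_const p).aestronglyMeasurable,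
    integral_eq_lintegral_of_nonneg_ae (hnonneg _) hint.aestronglyMeasurable]
  exact ENNReal.toReal_mono
    ((lintegral_ofReal_ne_top_iff_integrable hint.aestronglyMeasurable (hnonneg Q)).2 hint)
    (hconc.lintegral_rpow_abs_sub_le hmeas hG hmeas₀ hp)
end

section
/- Let Q : [0,1] → ℝ be measurable and bounded, and let Q* be its increasing rearrangement. Then ‖Q* − Q₀‖_{L^∞} ≤ ‖Q − Q₀‖_{L^∞} for any nondecreasing function Q₀ : [0,1] → ℝ. -/
open MeasureTheory Set Filter Topology
open scoped ENNReal NNReal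

/-- The rearranged curve is weakly closer in `L^∞` (essential supremum on `[0,1]`)
to any nondecreasing target `Q₀` than the original curve. -/
theorem rearr_Linfty_improvement (Q Q₀ : ℝ → ℝ)
    (hmeas : Measurable Q) (M : ℝ) (hbdd : ∀ u ∈ Set.Icc (0:ℝ) 1, |Q u| ≤ M)
    (hmono₀ : MonotoneOn Q₀ (Set.Icc (0:ℝ) 1)) :
    eLpNorm (fun u => rearr Q u - Q₀ u) ⊤ (volume.restrict (Set.Icc (0:ℝ) 1))
      ≤ eLpNorm (fun u => Q u - Q₀ u) ⊤ (volume.restrict (Set.Icc (0:ℝ) 1)) := by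
  set μ := volume.restrict (Set.Icc (0:ℝ) 1) with hμ
  by_cases htop : eLpNorm (fun u => Q u - Q₀ u) ⊤ μ = ⊤
  · rw [htop]; exact le_top
  set c : ℝ := (eLpNorm (fun u => Q u - Q₀ u) ⊤ μ).toReal with hcdef
  -- a.e. bound for the original function
  have hae : ∀ᵐ u ∂μ, |Q u - Q₀ u| ≤ c := by
    have h := MeasureTheory.ae_le_eLpNormEssSup (f := fun u => Q u - Q₀ u) (μ := μ)
    rw [eLpNorm_exponent_top] at htop hcdef
    filter_upwards [h] with u hu
    have h2 : ((‖Q u - Q₀ u‖₊ : ℝ≥0∞)).toReal ≤ c := by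
      rw [hcdef]; exact ENNReal.toReal_mono htop hu
    simpa [Real.norm_eq_abs] using h2
  have hae' : ∀ᵐ u ∂volume, u ∈ Set.Icc (0:ℝ) 1 → |Q u - Q₀ u| ≤ c :=
    (ae_restrict_iff' measurableSet_Icc).mp hae
  set N : Set ℝ := {u | ¬ (u ∈ Set.Icc (0:ℝ) 1 → |Q u - Q₀ u| ≤ c)} with hNdef
  have hN : volume N = 0 := hae'
  have hNbound : ∀ s ∈ Set.Icc (0:ℝ) 1, s ∉ N → |Q s - Q₀ s| ≤ c := by
    intro s hs hsN
    by_contra h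
    exact hsN (by simp only [hNdef, Set.mem_setOf_eq, Classical.not_imp]; exact ⟨hs, h⟩)
  -- finiteness of the distribution measures
  have hfin : ∀ y : ℝ, volume {s ∈ Set.Icc (0:ℝ) 1 | Q s ≤ y} ≠ ⊤ := by
    intro y
    refine ne_of_lt (lt_of_le_of_lt (measure_mono (sep_subset _ _)) ?_)
    simp [Real.volume_Icc]
  -- upper bound: rearr Q u ≤ Q₀ u + c on (0,1]
  have hub : ∀ u ∈ Set.Ioc (0:ℝ) 1, rearr Q u ≤ Q₀ u + c := by
    intro u hu
    have huIcc : u ∈ Set.Icc (0:ℝ) 1 := ⟨hu.1.le, hu.2⟩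
    apply csInf_le
    · refine ⟨-M, fun y hy => ?_⟩
      simp only [Set.mem_setOf_eq] at hy
      by_contra hlt
      push_neg at hlt
      have hempty : {s ∈ Set.Icc (0:ℝ) 1 | Q s ≤ y} = ∅ := by
        ext s
        simp only [Set.mem_sep_iff, Set.mem_empty_iff_false, iff_false, not_and]
        intro hs hQs
        have := hbdd s hs
        have : -M ≤ Q s := by cases abs_le.mp this; linarith
        linarith
      rw [distF, hempty] at hy
      simp at hy
      linarith [hu.1]
    · show u ≤ distF Q (Q₀ u + c)
      have hsub : Set.Icc 0 u \ N ⊆ {s ∈ Set.Icc (0:ℝ) 1 | Q s ≤ Q₀ u + c} := by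
        rintro s ⟨hs, hsN⟩
        have hsIcc : s ∈ Set.Icc (0:ℝ) 1 := ⟨hs.1, hs.2.trans hu.2⟩
        have hb := hNbound s hsIcc hsN
        have hQ₀ : Q₀ s ≤ Q₀ u := hmono₀ hsIcc huIcc hs.2
        have : Q s - Q₀ s ≤ c := (abs_le.mp hb).2
        exact ⟨hsIcc, by linarith⟩
      have hvol : ENNReal.ofReal u ≤ volume {s ∈ Set.Icc (0:ℝ) 1 | Q s ≤ Q₀ u + c} := by
        calc ENNReal.ofReal u = volume (Set.Icc 0 u \ N) := by
              rw [measure_diff_null hN, Real.volume_Icc, sub_zero]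
          _ ≤ _ := measure_mono hsub
      have := ENNReal.toReal_mono (hfin (Q₀ u + c)) hvol
      rwa [ENNReal.toReal_ofReal hu.1.le] at this
  -- lower bound: Q₀ u' - c ≤ rearr Q u for u' < u
  have hlb : ∀ u ∈ Set.Ioc (0:ℝ) 1, ∀ u' ∈ Set.Ico (0:ℝ) u, Q₀ u' - c ≤ rearr Q u := by
    intro u hu u' hu'
    have hu'Icc : u' ∈ Set.Icc (0:ℝ) 1 := ⟨hu'.1, hu'.2.le.trans hu.2⟩
    apply le_csInf
    · refine ⟨M, ?_⟩
      simp only [Set.mem_setOf_eq, distF]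
      have : {s ∈ Set.Icc (0:ℝ) 1 | Q s ≤ M} = Set.Icc (0:ℝ) 1 := by
        ext s
        simp only [Set.mem_sep_iff, and_iff_left_iff_imp]
        intro hs
        exact (abs_le.mp (hbdd s hs)).2
      rw [this, Real.volume_Icc]
      simpa using hu.2
    · intro y hy
      simp only [Set.mem_setOf_eq] at hy
      by_contra h
      push_neg at h
      have hsub : {s ∈ Set.Icc (0:ℝ) 1 | Q s ≤ y} ⊆ Set.Ico 0 u' ∪ N := by
        rintro s ⟨hs, hQs⟩
        by_contra hcon
        rw [Set.mem_union] at hcon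
        push_neg at hcon
        obtain ⟨h1, h2⟩ := hcon
        have hsu' : u' ≤ s := by
          by_contra h3; push_neg at h3; exact absurd ⟨hs.1, h3⟩ h1
        have hb := hNbound s hs h2
        have hQ₀ : Q₀ u' ≤ Q₀ s := hmono₀ hu'Icc hs hsu'
        have : -c ≤ Q s - Q₀ s := (abs_le.mp hb).1
        linarith
      have hle : volume {s ∈ Set.Icc (0:ℝ) 1 | Q s ≤ y} ≤ ENNReal.ofReal u' := by
        calc volume {s ∈ Set.Icc (0:ℝ) 1 | Q s ≤ y} ≤ volume (Set.Ico 0 u' ∪ N) :=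
              measure_mono hsub
          _ ≤ volume (Set.Ico 0 u') + volume N := measure_union_le _ _
          _ = ENNReal.ofReal u' := by rw [hN, Real.volume_Ico, sub_zero, add_zero]
      have : distF Q y ≤ u' := by
        have := ENNReal.toReal_mono (by simp) hle
        rwa [ENNReal.toReal_ofReal hu'.1] at this
      linarith [hu'.2, hy]
  -- monotone extension of Q₀
  set g : ℝ → ℝ := fun x => Q₀ (min 1 (max 0 x)) with hgdef
  have hmemg : ∀ x : ℝ, min 1 (max 0 x) ∈ Set.Icc (0:ℝ) 1 := by
    intro x
    constructor
    · exact le_min zero_le_one (le_max_left _ _)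
    · exact min_le_left _ _
  have hg : Monotone g := by
    intro a b hab
    exact hmono₀ (hmemg a) (hmemg b) (min_le_min le_rfl (max_le_max le_rfl hab))
  have hgeq : ∀ x ∈ Set.Icc (0:ℝ) 1, g x = Q₀ x := by
    intro x hx
    simp [hgdef, max_eq_right hx.1, min_eq_right hx.2]
  have hcnull : volume {x : ℝ | ¬ContinuousAt g x} = 0 :=
    (hg.countable_not_continuousAt).measure_zero _
  -- the key a.e. bound for the rearrangement
  have key : ∀ᵐ u ∂μ, ‖rearr Q u - Q₀ u‖ ≤ c := by
    rw [ae_restrict_iff' measurableSet_Icc]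
    have h1 : ∀ᵐ u ∂(volume : Measure ℝ), u ∉ ({0} : Set ℝ) := by
      rw [ae_iff]; simpa using measure_singleton (0:ℝ)
    have h2 : ∀ᵐ u ∂(volume : Measure ℝ), ContinuousAt g u := by
      rw [ae_iff]; exact hcnull
    filter_upwards [h1, h2] with u hu0 hcont hmem
    have hune : u ≠ 0 := by simpa using hu0
    have huIoc : u ∈ Set.Ioc (0:ℝ) 1 := ⟨lt_of_le_of_ne hmem.1 (Ne.symm hune), hmem.2⟩
    rw [Real.norm_eq_abs, abs_le]
    constructor
    · -- Q₀ u - c ≤ rearr Q u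
      have hmain : ∀ ε > 0, Q₀ u - c - ε ≤ rearr Q u := by
        intro ε hε
        rw [Metric.continuousAt_iff] at hcont
        obtain ⟨δ, hδ, hcont⟩ := hcont ε hε
        set u' := max 0 (u - δ/2) with hu'def
        have hu'lt : u' < u := max_lt huIoc.1 (by linarith)
        have hu'Ico : u' ∈ Set.Ico 0 u := ⟨le_max_left _ _, hu'lt⟩
        have hu'Icc : u' ∈ Set.Icc (0:ℝ) 1 := ⟨hu'Ico.1, hu'lt.le.trans hmem.2⟩
        have hdist : dist u' u < δ := by
          rw [Real.dist_eq, abs_lt]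
          constructor
          · have : u - δ/2 ≤ u' := le_max_right _ _
            linarith
          · linarith [hu'lt]
        have := hcont hdist
        rw [Real.dist_eq, hgeq u' hu'Icc, hgeq u hmem] at this
        have hQ' : Q₀ u - ε ≤ Q₀ u' := by
          have := (abs_lt.mp this).1
          linarith
        have := hlb u huIoc u' hu'Ico
        linarith
      exact le_of_forall_pos_le_add fun ε hε => by linarith [hmain ε hε]
    · linarith [hub u huIoc]
  calc eLpNorm (fun u => rearr Q u - Q₀ u) ⊤ μ
      = eLpNormEssSup (fun u => rearr Q u - Q₀ u) μ := eLpNorm_exponent_top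
    _ ≤ ENNReal.ofReal c := eLpNormEssSup_le_of_ae_bound key
    _ = eLpNorm (fun u => Q u - Q₀ u) ⊤ μ := ENNReal.ofReal_toReal htop
end

section
/- Let Q : [0,1] → ℝ be C¹ with Q'(u) > 0 for all u ∈ [0,1], and let h_t → h uniformly with h continuous on [0,1]. Let (Q + t·h_t)* denote the increasing rearrangement of Q + t·h_t. Then, uniformly in u on compact subsets of (0,1), ((Q + t·h_t)*(u) − Q(u))/t → h(u) as t → 0⁺; i.e., when the base function is strictly increasing, the Hadamard derivative of the rearrangement operator is the identity. -/
open MeasureTheory Set Filter Topology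

/-!
Approximate `h` within `ε/3` by a polynomial `p`. Since `Q'` is bounded below by a positive
constant on `[0,1]` and `p'` is bounded there, `Q + t·p` is strictly increasing for small `t`,
and so are `Q + t·(p ± 2ε/3)`, which bracket `Q + t·h_t` once `h_t` is `ε/3`-close to `h`.
A continuous strictly increasing function is its own rearrangement and rearrangement is
monotone, so `(Q + t·h_t)*(u)` lies between `Q(u) + t·(p(u) ± 2ε/3)`.
-/

lemma distF_le_distF_of_subset {F G : ℝ → ℝ} {y z : ℝ}
    (h : {v ∈ Icc (0:ℝ) 1 | F v ≤ y} ⊆ {v ∈ Icc (0:ℝ) 1 | G v ≤ z}) :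
    distF F y ≤ distF G z :=
  ENNReal.toReal_mono ((measure_mono (sep_subset _ _)).trans_lt measure_Icc_lt_top).ne
    (measure_mono h)

lemma distF_mono (F : ℝ → ℝ) : Monotone (distF F) := fun _ _ hyz =>
  distF_le_distF_of_subset fun _ hv => ⟨hv.1, hv.2.trans hyz⟩

lemma distF_le_distF {F G : ℝ → ℝ} (hGF : ∀ v ∈ Icc (0:ℝ) 1, G v ≤ F v) (y : ℝ) :
    distF F y ≤ distF G y :=
  distF_le_distF_of_subset fun v hv => ⟨hv.1, (hGF v hv.1).trans hv.2⟩

lemma distF_eq_of_sep_eq_Icc {F : ℝ → ℝ} {y a : ℝ} (ha : 0 ≤ a)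
    (h : {v ∈ Icc (0:ℝ) 1 | F v ≤ y} = Icc 0 a) : distF F y = a := by
  rw [distF, h, Real.volume_Icc, sub_zero, ENNReal.toReal_ofReal ha]

lemma distF_eq_one_of_forall_le {F : ℝ → ℝ} {M : ℝ} (hM : ∀ v ∈ Icc (0:ℝ) 1, F v ≤ M) :
    distF F M = 1 :=
  distF_eq_of_sep_eq_Icc zero_le_one (sep_eq_self_iff_mem_true.mpr hM)

lemma distF_eq_zero_of_forall_lt {G : ℝ → ℝ} {y : ℝ} (hy : ∀ v ∈ Icc (0:ℝ) 1, y < G v) :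
    distF G y = 0 := by
  rw [distF, sep_eq_empty_iff_mem_false.mpr fun v hv => not_le.mpr (hy v hv)]
  simp

lemma rearr_le_rearr {F G : ℝ → ℝ} (hGF : ∀ v ∈ Icc (0:ℝ) 1, G v ≤ F v)
    (hF : BddAbove (F '' Icc 0 1)) (hG : BddBelow (G '' Icc 0 1)) {u : ℝ}
    (hu : u ∈ Ioc (0:ℝ) 1) : rearr G u ≤ rearr F u := by
  obtain ⟨M, hM⟩ := hF
  obtain ⟨m, hm⟩ := hG
  refine csInf_le_csInf ⟨m, fun y hy => ?_⟩ ⟨M, ?_⟩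
    fun y hy => le_trans hy (distF_le_distF hGF y)
  · by_contra! hym
    have h0 := distF_eq_zero_of_forall_lt fun v hv => hym.trans_le (hm (mem_image_of_mem G hv))
    exact hu.1.not_ge (h0 ▸ hy)
  · show u ≤ distF F M
    rw [distF_eq_one_of_forall_le fun v hv => hM (mem_image_of_mem F hv)]
    exact hu.2

lemma distF_apply_self_of_strictMonoOn {F : ℝ → ℝ} (hF : StrictMonoOn F (Icc 0 1)) {u : ℝ}
    (hu : u ∈ Icc (0:ℝ) 1) : distF F (F u) = u := by
  refine distF_eq_of_sep_eq_Icc hu.1 (Set.ext fun v => ⟨fun hv => ?_, fun hv => ?_⟩)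
  · exact ⟨hv.1.1, (hF.le_iff_le hv.1 hu).mp hv.2⟩
  · have hv' : v ∈ Icc (0:ℝ) 1 := ⟨hv.1, hv.2.trans hu.2⟩
    exact ⟨hv', (hF.le_iff_le hv' hu).mpr hv.2⟩

/-- Continuity from the left at `u` is what rules out a level set of positive length ending
at `u`. -/
lemma distF_lt_of_lt_apply {F : ℝ → ℝ} (hFc : ContinuousOn F (Icc 0 1))
    (hF : StrictMonoOn F (Icc 0 1)) {u y : ℝ} (hu : u ∈ Ioc (0:ℝ) 1) (hy : y < F u) :
    distF F y < u := by
  have hleft : 𝓝[<] u ≤ 𝓝[Icc 0 1] u :=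
    nhdsWithin_le_of_mem (mem_of_superset (Ioo_mem_nhdsLT hu.1)
      fun w hw => ⟨hw.1.le, hw.2.le.trans hu.2⟩)
  obtain ⟨w, hyw, hw⟩ : ∃ w, y < F w ∧ w ∈ Ioo 0 u :=
    (((hFc u (Ioc_subset_Icc_self hu)).eventually (lt_mem_nhds hy)).filter_mono hleft).and
      (Ioo_mem_nhdsLT hu.1) |>.exists
  calc distF F y ≤ distF F (F w) := distF_mono F hyw.le
    _ = w := distF_apply_self_of_strictMonoOn hF ⟨hw.1.le, hw.2.le.trans hu.2⟩
    _ < u := hw.2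

lemma rearr_eq_self_of_strictMonoOn {F : ℝ → ℝ} (hFc : ContinuousOn F (Icc 0 1))
    (hF : StrictMonoOn F (Icc 0 1)) {u : ℝ} (hu : u ∈ Ioc (0:ℝ) 1) : rearr F u = F u := by
  have hsuper : {y | u ≤ distF F y} = Ici (F u) := by
    ext y
    refine ⟨fun hy => not_lt.mp fun hlt => (distF_lt_of_lt_apply hFc hF hu hlt).not_ge hy,
      fun hy => ?_⟩
    calc u = distF F (F u) := (distF_apply_self_of_strictMonoOn hF (Ioc_subset_Icc_self hu)).symm
      _ ≤ distF F y := distF_mono F hy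
  rw [rearr, hsuper, csInf_Ici]

lemma rearr_mem_Icc_of_le_of_le {L G U : ℝ → ℝ}
    (hLc : ContinuousOn L (Icc 0 1)) (hL : StrictMonoOn L (Icc 0 1))
    (hUc : ContinuousOn U (Icc 0 1)) (hU : StrictMonoOn U (Icc 0 1))
    (hLG : ∀ v ∈ Icc (0:ℝ) 1, L v ≤ G v) (hGU : ∀ v ∈ Icc (0:ℝ) 1, G v ≤ U v)
    {u : ℝ} (hu : u ∈ Ioc (0:ℝ) 1) : rearr G u ∈ Icc (L u) (U u) := by
  obtain ⟨m, hm⟩ := isCompact_Icc.bddBelow_image hLc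
  obtain ⟨M, hM⟩ := isCompact_Icc.bddAbove_image hUc
  have hGbelow : BddBelow (G '' Icc 0 1) :=
    ⟨m, forall_mem_image.mpr fun v hv => (hm (mem_image_of_mem L hv)).trans (hLG v hv)⟩
  have hGabove : BddAbove (G '' Icc 0 1) :=
    ⟨M, forall_mem_image.mpr fun v hv => (hGU v hv).trans (hM (mem_image_of_mem U hv))⟩
  constructor
  · calc L u = rearr L u := (rearr_eq_self_of_strictMonoOn hLc hL hu).symm
      _ ≤ rearr G u := rearr_le_rearr hLG hGabove ⟨m, hm⟩ hu
  · calc rearr G u ≤ rearr U u := rearr_le_rearr hGU ⟨M, hM⟩ hGbelow hu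
      _ = U u := rearr_eq_self_of_strictMonoOn hUc hU hu

lemma abs_rearr_add_mul_sub_div_sub_le {Q g H : ℝ → ℝ} {t η : ℝ} (ht : 0 < t)
    (hc : ContinuousOn (fun v => Q v + t * g v) (Icc 0 1))
    (hmono : StrictMonoOn (fun v => Q v + t * g v) (Icc 0 1))
    (hHg : ∀ v ∈ Icc (0:ℝ) 1, |H v - g v| ≤ η) {u : ℝ} (hu : u ∈ Ioc (0:ℝ) 1) :
    |(rearr (fun v => Q v + t * H v) u - Q u) / t - g u| ≤ η := by
  obtain ⟨hlo, hhi⟩ := rearr_mem_Icc_of_le_of_le (G := fun v => Q v + t * H v)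
    (L := fun v => Q v + t * g v + -(t * η)) (U := fun v => Q v + t * g v + t * η)
    (hc.add continuousOn_const) (hmono.add_const (-(t * η)))
    (hc.add continuousOn_const) (hmono.add_const (t * η))
    (fun v hv => by nlinarith [(abs_le.mp (hHg v hv)).1])
    (fun v hv => by nlinarith [(abs_le.mp (hHg v hv)).2]) hu
  rw [abs_le, le_sub_iff_add_le, sub_le_iff_le_add, le_div_iff₀ ht, div_le_iff₀ ht]
  constructor <;> linarith

lemma strictMonoOn_add_mul_of_le_deriv {D : Set ℝ} (hD : Convex ℝ D) {f g : ℝ → ℝ}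
    (hf : Differentiable ℝ f) (hg : Differentiable ℝ g) {c L t : ℝ}
    (hfc : ∀ x ∈ D, c ≤ deriv f x) (hgL : ∀ x ∈ D, |deriv g x| ≤ L) (ht : 0 ≤ t)
    (htL : t * L < c) : StrictMonoOn (fun x => f x + t * g x) D := by
  refine strictMonoOn_of_deriv_pos hD
    (hf.continuous.add (continuous_const.mul hg.continuous)).continuousOn fun x hx => ?_
  have hxD := interior_subset hx
  have hderiv : HasDerivAt (fun x => f x + t * g x) (deriv f x + t * deriv g x) x :=
    (hf x).hasDerivAt.add ((hg x).hasDerivAt.const_mul t)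
  rw [hderiv.deriv]
  nlinarith [abs_le.mp (hgL x hxD), hfc x hxD]

theorem rearr_hadamard_derivative_identity_general (Q : ℝ → ℝ)
    (hQ : ContDiff ℝ 1 Q) (hQ' : ∀ u ∈ Set.Icc (0:ℝ) 1, 0 < deriv Q u)
    (h : ℝ → ℝ) (hh : Continuous h)
    (H : ℝ → ℝ → ℝ)
    (hHlim : ∀ ε > (0:ℝ), ∃ δ > (0:ℝ), ∀ t ∈ Set.Ioo (0:ℝ) δ,
      ∀ u ∈ Set.Icc (0:ℝ) 1, |H t u - h u| ≤ ε) :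
    ∀ K : Set ℝ, IsCompact K → K ⊆ Set.Ioo (0:ℝ) 1 →
      ∀ ε > (0:ℝ), ∃ δ > (0:ℝ), ∀ t ∈ Set.Ioo (0:ℝ) δ, ∀ u ∈ K,
        |(rearr (fun s => Q s + t * H t s) u - Q u) / t - h u| ≤ ε := by
  intro K _ hKsub ε hε
  obtain ⟨x₀, hx₀, hmin⟩ := isCompact_Icc.exists_isMinOn (nonempty_Icc.mpr zero_le_one)
    (hQ.continuous_deriv le_rfl).continuousOn
  obtain ⟨p, hp⟩ := exists_polynomial_near_of_continuousOn 0 1 h hh.continuousOn (ε / 3)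
    (by positivity)
  obtain ⟨L, hL⟩ := (isCompact_Icc (a := (0:ℝ)) (b := 1)).exists_bound_of_continuousOn
    p.derivative.continuous.continuousOn
  obtain ⟨δ, hδ, hH⟩ := hHlim (ε / 3) (by positivity)
  have hL0 : 0 ≤ L := (norm_nonneg _).trans (hL 0 (left_mem_Icc.mpr zero_le_one))
  refine ⟨min δ (deriv Q x₀ / (L + 1)), lt_min hδ (div_pos (hQ' x₀ hx₀) (by linarith)),
    fun t ht u hu => ?_⟩
  have htL : t * L < deriv Q x₀ := by
    have := (lt_div_iff₀ (by linarith)).mp (ht.2.trans_le (min_le_right _ _))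
    nlinarith [ht.1]
  have hmono : StrictMonoOn (fun v => Q v + t * p.eval v) (Icc 0 1) :=
    strictMonoOn_add_mul_of_le_deriv (convex_Icc 0 1) (hQ.differentiable one_ne_zero)
      p.differentiable hmin (by simpa only [Polynomial.deriv, Real.norm_eq_abs] using hL) ht.1.le htL
  have hHp : ∀ v ∈ Icc (0:ℝ) 1, |H t v - p.eval v| ≤ 2 * (ε / 3) := fun v hv => calc
    |H t v - p.eval v| ≤ |H t v - h v| + |h v - p.eval v| := abs_sub_le _ _ _
    _ ≤ ε / 3 + ε / 3 := add_le_add (hH t ⟨ht.1, ht.2.trans_le (min_le_left _ _)⟩ v hv)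
        (abs_sub_comm (p.eval v) (h v) ▸ (hp v hv).le)
    _ = 2 * (ε / 3) := by ring
  have hp_near := abs_rearr_add_mul_sub_div_sub_le ht.1
    (hQ.continuous.add (continuous_const.mul p.continuous)).continuousOn hmono hHp
    (Ioo_subset_Ioc_self (hKsub hu))
  calc |(rearr (fun s => Q s + t * H t s) u - Q u) / t - h u|
      ≤ |(rearr (fun s => Q s + t * H t s) u - Q u) / t - p.eval u| + |p.eval u - h u| :=
        abs_sub_le _ _ _
    _ ≤ 2 * (ε / 3) + ε / 3 := add_le_add hp_near (hp u (Ioo_subset_Icc_self (hKsub hu))).le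
    _ = ε := by ring

/-- In the strictly increasing case the Hadamard derivative of the rearrangement
operator is the identity: `((Q + t·h_t)*(u) − Q(u))/t → h(u)` as `t → 0⁺`, uniformly
on compact subsets of `(0,1)`. -/
theorem rearr_hadamard_derivative_identity (Q : ℝ → ℝ)
    (hQ : ContDiff ℝ 1 Q) (hQ' : ∀ u ∈ Set.Icc (0:ℝ) 1, 0 < deriv Q u)
    (h : ℝ → ℝ) (hh : Continuous h)
    (H : ℝ → ℝ → ℝ) (hHmeas : ∀ t, Measurable (H t))
    (hHlim : ∀ ε > (0:ℝ), ∃ δ > (0:ℝ), ∀ t ∈ Set.Ioo (0:ℝ) δ,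
      ∀ u ∈ Set.Icc (0:ℝ) 1, |H t u - h u| ≤ ε) :
    ∀ K : Set ℝ, IsCompact K → K ⊆ Set.Ioo (0:ℝ) 1 →
      ∀ ε > (0:ℝ), ∃ δ > (0:ℝ), ∀ t ∈ Set.Ioo (0:ℝ) δ, ∀ u ∈ K,
        |(rearr (fun s => Q s + t * H t s) u - Q u) / t - h u| ≤ ε :=
  rearr_hadamard_derivative_identity_general Q hQ hQ' h hh H hHlim
end
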